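/- arXiv:math/0001173 — 5 statements merged into one kernel-verified Lean document; each statement's English description precedes it below -/
import Mathlib

section
/- With the setup of the previous construction (f(x)(⟨n,m⟩) = (h_n · x)(m) and π_a induced by the right regular representation), if f is injective on orbits in the sense that f(x) = f(y) ∘ π for some π in the group S₀ = {π_a : a ∈ ℕ} then x and y lie in the same H-orbit; conversely, if x and y are in the same H-orbit then f(x) = f(y) ∘ π for some π ∈ S₀. Hence x E_H y ⟺ ∃π ∈ S₀, f(x) = f(y) ∘ π. -/
/-- With `f(x)(⟨n,m⟩) = (h n • x) m`, `π_a` induced by the right regular representation,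
and `h 0 = 1`: two points `x, y` lie in the same `H`-orbit iff `f x = f y ∘ π` for some
`π` in `S₀ = {π_a : a ∈ ℕ}`. -/
theorem orbit_iff_reduction
    {H X : Type*} [Group H] [MulAction H (ℕ → X)]
    (h : ℕ → H) (hbij : Function.Bijective h) (h0 : h 0 = 1)
    (pair : ℕ × ℕ ≃ ℕ)
    (tilde : ℕ → ℕ → ℕ) (htilde : ∀ a n, h (tilde a n) = h n * h a)
    (π : ℕ → ℕ → ℕ) (hπ : ∀ a n m, π a (pair (n, m)) = pair (tilde a n, m))
    (f : (ℕ → X) → (ℕ → X)) (hf : ∀ x n m, f x (pair (n, m)) = (h n • x) m) :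
    ∀ x y : ℕ → X, (∃ g : H, g • x = y) ↔ ∃ a : ℕ, f x = f y ∘ π a := by
  intro x y
  constructor
  · rintro ⟨g, rfl⟩
    obtain ⟨a, ha⟩ := hbij.2 g⁻¹
    refine ⟨a, funext fun k => ?_⟩
    obtain ⟨⟨n, m⟩, rfl⟩ := pair.surjective k
    simp only [Function.comp_apply, hπ, hf, htilde, mul_smul, ha, inv_smul_smul]
  · rintro ⟨a, ha⟩
    have hx : x = h a • y := funext fun m => by
      have := congrFun ha (pair (0, m))
      simpa only [Function.comp_apply, hπ, hf, htilde, h0, one_mul, one_smul] using this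
    exact ⟨(h a)⁻¹, by rw [hx, inv_smul_smul]⟩
end

section
/- Let F₂ ≤ F₃ be the free groups on generators {α₁, α₂} and {α₁, α₂, α₃} respectively, and fix a left-free point z₀ ∈ {2,3}^{F₂}. Define f : 2^{F₂} → 4^{F₃} by f(x)(h) = x(h) if h ∈ F₂, and f(x)(h) = z₀(h') if h ∉ F₂, where h = h₁ α₃^{±1} h' is the reduced-word decomposition with h' ∈ F₂ the maximal terminal segment of h lying in F₂. Then for every x ∈ 2^{F₂}, the point f(x) is left-free in 4^{F₃} under the shift action of F₃. -/
/-- The free group on two generators. -/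
abbrev F2 := FreeGroup (Fin 2)

/-- The free group on three generators. -/
abbrev F3 := FreeGroup (Fin 3)

/-- The canonical embedding `F₂ ≤ F₃` (on the first two generators). -/
def ι : F2 →* F3 := FreeGroup.map Fin.castSucc

/-- The third generator `α₃` of `F₃`. -/
def α3 : F3 := FreeGroup.of 2

/-- The shift action of a group `G` on `X^G`: `(g · x)(h) = x (g⁻¹ * h)`. -/
def shift {G X : Type*} [Group G] (g : G) (x : G → X) : G → X := fun h => x (g⁻¹ * h)

/-- `x ∈ X^G` is left-free if distinct right translates are separated. -/
def LeftFree {G X : Type*} [Group G] (x : G → X) : Prop :=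
  ∀ g g' : G, g ≠ g' → ∃ h : G, x (h * g) ≠ x (h * g')

/-- The maximal terminal segment of the reduced word of `h ∈ F₃` consisting of letters
from `{α₁^{±1}, α₂^{±1}}`, viewed as an element of `F₂`. -/
def tail (h : F3) : F2 :=
  FreeGroup.mk (((h.toWord.reverse.takeWhile fun p => p.1 ≠ 2).reverse).map
    fun p => (if hp : (p.1 : ℕ) < 2 then (⟨p.1, hp⟩ : Fin 2) else 0, p.2))

open Classical in
/-- The map `f : 2^{F₂} → 4^{F₃}`: `f x` agrees with `x` on `F₂` and with `z₀ ∘ tail`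
off `F₂`. -/
noncomputable def fmap (z₀ : F2 → Fin 4) (x : F2 → Fin 2) : F3 → Fin 4 := fun h =>
  if hh : h ∈ Set.range ι then Fin.castLE (by norm_num) (x (Classical.choose hh))
  else z₀ (tail h)

/- ### Auxiliary lemmas -/

section Aux

open FreeGroup List

variable {α : Type*} [DecidableEq α]

/-- Relation: consecutive letters don't cancel. -/
def NC (a b : α × Bool) : Prop := ¬(a.1 = b.1 ∧ a.2 = !b.2)

lemma reduce_eq_self_of_chain : ∀ {L : List (α × Bool)}, List.Chain' NC L →
    FreeGroup.reduce L = L := by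
  intro L
  induction L with
  | nil => simp
  | cons x M ih =>
    intro h
    rw [FreeGroup.reduce.cons, ih h.tail]
    cases M with
    | nil => rfl
    | cons y t =>
      have hxy : NC x y := (List.isChain_cons_cons.mp h).1
      simp [NC] at hxy
      by_cases h1 : x.1 = y.1
      · simp [h1, hxy h1]
      · simp [h1]

lemma chain'_reduce : ∀ (L : List (α × Bool)), List.Chain' NC (FreeGroup.reduce L) := by
  intro L
  induction L with
  | nil => exact List.isChain_nil
  | cons x M ih =>
    rw [FreeGroup.reduce.cons]
    cases hM : FreeGroup.reduce M with
    | nil => exact List.isChain_singleton _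
    | cons y t =>
      rw [hM] at ih
      show List.Chain' NC (if x.1 = y.1 ∧ x.2 = !y.2 then t else x :: y :: t)
      split_ifs with hc
      · exact ih.tail
      · exact List.isChain_cons_cons.mpr ⟨hc, ih⟩

lemma chain'_toWord (w : FreeGroup α) : List.Chain' NC w.toWord := by
  rcases w with ⟨L⟩
  rw [FreeGroup.quot_mk_eq_mk, FreeGroup.toWord_mk]
  exact chain'_reduce L

/-- The letter map `Fin 2 × Bool → Fin 3 × Bool`. -/
def φ : Fin 2 × Bool → Fin 3 × Bool := fun p => (p.1.castSucc, p.2)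

lemma φ_fst_ne (p : Fin 2 × Bool) : (φ p).1 ≠ 2 := by
  simp only [φ]
  intro h
  have := congrArg Fin.val h
  simp [Fin.castSucc, Fin.castAdd, Fin.castLE] at this
  omega

lemma NC_map {a b : Fin 2 × Bool} (h : NC a b) : NC (φ a) (φ b) := by
  simp only [NC, φ] at h ⊢
  rintro ⟨h1, h2⟩
  exact h ⟨Fin.castSucc_injective _ h1, h2⟩

lemma toWord_iota (w : F2) : (ι w).toWord = w.toWord.map φ := by
  conv_lhs => rw [ι, ← FreeGroup.mk_toWord (x := w), FreeGroup.map.mk, FreeGroup.toWord_mk]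
  exact reduce_eq_self_of_chain
    (List.isChain_map_of_isChain φ (fun a b => NC_map) (chain'_toWord w))

lemma chain_cons_word (w : F2) : List.Chain' NC (((2 : Fin 3), true) :: w.toWord.map φ) := by
  apply List.isChain_cons.mpr
  refine ⟨?_, List.isChain_map_of_isChain φ (fun a b => NC_map) (chain'_toWord w)⟩
  intro y hy
  simp only [NC]
  rintro ⟨h1, -⟩
  have : y ∈ w.toWord.map φ := List.mem_of_mem_head? hy
  obtain ⟨p, -, rfl⟩ := List.mem_map.mp this
  exact φ_fst_ne p h1.symm

lemma toWord_a3_iota (w : F2) :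
    (α3 * ι w).toWord = ((2 : Fin 3), true) :: w.toWord.map φ := by
  have h2 : ι w = FreeGroup.mk (w.toWord.map φ) := by
    rw [← toWord_iota, FreeGroup.mk_toWord]
  have h1 : α3 * ι w = FreeGroup.mk (((2 : Fin 3), true) :: w.toWord.map φ) := by
    rw [h2, α3, FreeGroup.of, FreeGroup.mul_mk]
    rfl
  rw [h1, FreeGroup.toWord_mk, reduce_eq_self_of_chain (chain_cons_word w)]

lemma a3_iota_not_mem (w : F2) : α3 * ι w ∉ Set.range ι := by
  rintro ⟨v, hv⟩
  have h := congrArg FreeGroup.toWord hv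
  rw [toWord_iota, toWord_a3_iota] at h
  cases hvw : v.toWord with
  | nil => rw [hvw] at h; simp at h
  | cons p t =>
    rw [hvw] at h
    simp only [List.map_cons, List.cons.injEq] at h
    exact φ_fst_ne p (by rw [h.1])

lemma takeWhile_all_cons {β : Type*} (p : β → Bool) (l1 : List β)
    (h : ∀ x ∈ l1, p x = true) (y : β) (l2 : List β) (hy : p y = false) :
    List.takeWhile p (l1 ++ y :: l2) = l1 := by
  induction l1 with
  | nil => simp [List.takeWhile_cons, hy]
  | cons a t ih =>
    simp only [List.cons_append, List.takeWhile_cons, h a List.mem_cons_self,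
      if_true, ite_true]
    rw [ih (fun x hx => h x (List.mem_cons_of_mem a hx))]

lemma tail_a3_iota (w : F2) : tail (α3 * ι w) = w := by
  unfold _root_.tail
  rw [toWord_a3_iota]
  have hrev : (((2 : Fin 3), true) :: w.toWord.map φ).reverse
      = (w.toWord.map φ).reverse ++ [((2 : Fin 3), true)] := by simp
  rw [hrev, takeWhile_all_cons _ _ ?hall _ _ (by simp)]
  case hall =>
    intro x hx
    rw [List.mem_reverse] at hx
    obtain ⟨p, -, rfl⟩ := List.mem_map.mp hx
    simpa using φ_fst_ne p
  rw [List.reverse_reverse, List.map_map]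
  have hid : ((fun p : Fin 3 × Bool =>
        ((if hp : (p.1 : ℕ) < 2 then (⟨p.1, hp⟩ : Fin 2) else 0), p.2)) ∘ φ)
      = id := by
    funext p
    simp only [Function.comp_apply, φ, Fin.coe_castSucc, id_eq]
    simp [p.1.isLt]
  rw [hid, List.map_id, FreeGroup.mk_toWord]

lemma fmap_a3_iota (z₀ : F2 → Fin 4) (x : F2 → Fin 2) (w : F2) :
    fmap z₀ x (α3 * ι w) = z₀ w := by
  rw [fmap, dif_neg (a3_iota_not_mem w), tail_a3_iota]

end Aux

/-- If `z₀ ∈ {2,3}^{F₂}` is left-free, then `f x` is left-free in `4^{F₃}` for every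
`x ∈ 2^{F₂}`. -/
theorem fmap_leftFree (z₀ : F2 → Fin 4)
    (hz₀ : ∀ g : F2, z₀ g = 2 ∨ z₀ g = 3) (hzfree : LeftFree z₀) :
    ∀ x : F2 → Fin 2, LeftFree (fmap z₀ x) := by
  intro x g g' hgg'
  by_cases hc : g⁻¹ * g' ∈ Set.range ι
  · -- the ratio lies in F₂
    obtain ⟨a, ha⟩ := hc
    have ha1 : (1 : F2) ≠ a := by
      rintro rfl
      apply hgg'
      rw [map_one] at ha
      exact (inv_mul_eq_one.mp ha.symm)
    obtain ⟨t, ht⟩ := hzfree 1 a ha1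
    rw [mul_one] at ht
    refine ⟨(α3 * ι t) * g⁻¹, ?_⟩
    have hg : α3 * ι t * g⁻¹ * g = α3 * ι t := by group
    have hg' : α3 * ι t * g⁻¹ * g' = α3 * ι (t * a) := by
      rw [map_mul, ← mul_assoc, mul_assoc (α3 * ι t), ha]
    rw [hg, hg', fmap_a3_iota, fmap_a3_iota]
    exact ht
  · -- the ratio lies outside F₂
    refine ⟨g⁻¹, ?_⟩
    rw [inv_mul_cancel]
    have h1 : (1 : F3) ∈ Set.range ι := ⟨1, map_one ι⟩
    rw [fmap, dif_pos h1, fmap, dif_neg hc]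
    intro heq
    have hv := congrArg Fin.val heq
    have hlt : ((x (Classical.choose h1)) : ℕ) < 2 := (x (Classical.choose h1)).isLt
    rcases hz₀ (tail (g⁻¹ * g')) with hz | hz <;> rw [hz] at hv <;>
      simp [Fin.castLE] at hv <;> omega
end

section
/- With f : 2^{F₂} → 4^{F₃} defined as above (f(x) agrees with x on F₂ and with z₀ ∘ (tail map) off F₂), f is injective, f intertwines the shift actions restricted to F₂ (f(g·x) = g·f(x) for g ∈ F₂), and two points x, y ∈ 2^{F₂} are in the same F₂-shift-orbit iff f(x), f(y) are in the same F₂-shift-orbit in 4^{F₃}. -/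
/-!
On `F₂` the point `f x` is `x` itself, which gives injectivity. Off `F₂`, `f x` reads `z₀` at
the tail, and left multiplication by an element of `F₂` never reaches the last `α₃^{±1}` of a
reduced word: it cannot cancel that letter, so the suffix after it, and with it the tail, is
unchanged. Hence `f` is `F₂`-equivariant, and an injective equivariant map reflects orbits.
-/

open Function

namespace List

variable {α : Type*} {p : α → Bool}

theorem exists_eq_append_cons_of_exists {L : List α} (h : ∃ x ∈ L, p x = false) :
    ∃ S x T, L = S ++ x :: T ∧ p x = false ∧ ∀ y ∈ T, p y := by
  induction L with
  | nil => simp at h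
  | cons a L ih =>
    by_cases hL : ∃ x ∈ L, p x = false
    · obtain ⟨S, x, T, rfl, hx, hT⟩ := ih hL
      exact ⟨a :: S, x, T, rfl, hx, hT⟩
    · push Not at hL
      have ha : p a = false := by
        obtain ⟨x, hx, hpx⟩ := h
        rcases List.mem_cons.1 hx with rfl | hx
        · exact hpx
        · exact absurd hpx (hL x hx)
      exact ⟨[], a, L, rfl, ha, by simpa using hL⟩

theorem takeWhile_reverse_append_cons {S T : List α} {x : α} (hx : p x = false)
    (hT : ∀ y ∈ T, p y) : ((S ++ x :: T).reverse).takeWhile p = T.reverse := by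
  rw [reverse_append, reverse_cons, append_assoc,
    takeWhile_append_of_pos (by simpa using hT)]
  simp [hx]

end List

namespace FreeGroup

variable {α β : Type*}

theorem toWord_map [DecidableEq α] [DecidableEq β] {f : α → β} (hf : Injective f)
    (x : FreeGroup α) : (map f x).toWord = x.toWord.map (Prod.map f id) := by
  conv_lhs => rw [← mk_toWord (x := x)]
  rw [map.mk, toWord_mk]
  refine IsReduced.reduce_eq ((List.isChain_map _).2 ?_)
  exact isReduced_toWord.imp fun a b hab h => hab (hf h)

theorem mem_range_map_iff [DecidableEq α] [DecidableEq β] {f : α → β} (hf : Injective f)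
    {x : FreeGroup β} : x ∈ Set.range (map f) ↔ ∀ p ∈ x.toWord, p.1 ∈ Set.range f := by
  constructor
  · rintro ⟨y, rfl⟩ p hp
    rw [toWord_map hf] at hp
    obtain ⟨q, -, rfl⟩ := List.exists_of_mem_map hp
    exact ⟨q.1, rfl⟩
  · intro hx
    have : x.toWord ∈ Set.range (List.map (Prod.map f id)) := by
      rw [Set.range_list_map, Set.range_prodMap, Set.range_id]
      exact fun p hp => ⟨hx p hp, trivial⟩
    obtain ⟨L, hL⟩ := this
    exact ⟨mk L, by rw [map.mk, ← mk_toWord (x := x), ← hL]; rfl⟩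

variable [DecidableEq α] {a : α} {b : Bool} {S T : List (α × Bool)}

theorem exists_reduce_cons_eq_append_cons {m : α × Bool} (hm : m.1 ≠ a)
    {K : List (α × Bool)} (hK : reduce K = S ++ (a, b) :: T) :
    ∃ S', reduce (m :: K) = S' ++ (a, b) :: T := by
  rw [reduce.cons, hK]
  cases S with
  | nil => exact ⟨[m], by simp [hm]⟩
  | cons s S =>
    by_cases hc : m.1 = s.1 ∧ m.2 = !s.2
    · exact ⟨S, by simp [hc]⟩
    · exact ⟨m :: s :: S, by simp [hc]⟩

theorem exists_reduce_append_eq_append_cons {M : List (α × Bool)} (hM : ∀ p ∈ M, p.1 ≠ a)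
    {K : List (α × Bool)} (hK : reduce K = S ++ (a, b) :: T) :
    ∃ S', reduce (M ++ K) = S' ++ (a, b) :: T := by
  induction M with
  | nil => exact ⟨S, hK⟩
  | cons m M ih =>
    obtain ⟨S', hS'⟩ := ih fun p hp => hM p (List.mem_cons_of_mem m hp)
    exact exists_reduce_cons_eq_append_cons (hM m List.mem_cons_self) hS'

theorem exists_toWord_mul_eq_append_cons {x y : FreeGroup α} (hx : ∀ p ∈ x.toWord, p.1 ≠ a)
    (hy : y.toWord = S ++ (a, b) :: T) : ∃ S', (x * y).toWord = S' ++ (a, b) :: T := by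
  rw [toWord_mul]
  exact exists_reduce_append_eq_append_cons hx (by rw [reduce_toWord, hy])

end FreeGroup

theorem ι_injective : Injective ι :=
  FreeGroup.map_injective (Fin.castSucc_injective 2)

theorem mem_range_ι_iff {h : F3} : h ∈ Set.range ι ↔ ∀ p ∈ h.toWord, p.1 ≠ 2 := by
  simp only [ι, FreeGroup.mem_range_map_iff (Fin.castSucc_injective 2), Set.mem_range,
    Fin.exists_castSucc_eq]
  rfl

theorem ι_mul_mem_range_iff (w : F2) {h : F3} : ι w * h ∈ Set.range ι ↔ h ∈ Set.range ι := by
  rw [← MonoidHom.coe_range]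
  exact ι.range.mul_mem_cancel_left (MonoidHom.mem_range.2 ⟨w, rfl⟩)

theorem tail_ι_mul (w : F2) {h : F3} (hh : h ∉ Set.range ι) : tail (ι w * h) = tail h := by
  have hα₃ : ∃ p ∈ h.toWord, decide (p.1 ≠ 2) = false := by
    simpa only [mem_range_ι_iff, not_forall, not_not, decide_eq_false_iff_not, exists_prop]
      using hh
  obtain ⟨S, ⟨c, b⟩, T, hST, hc, hT⟩ := List.exists_eq_append_cons_of_exists hα₃
  obtain rfl : c = 2 := by simpa using hc
  obtain ⟨S', hS'⟩ := FreeGroup.exists_toWord_mul_eq_append_cons (mem_range_ι_iff.1 ⟨w, rfl⟩) hST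
  rw [tail, tail, hS', hST, List.takeWhile_reverse_append_cons (S := S') hc hT,
    List.takeWhile_reverse_append_cons (S := S) hc hT]

section fmap

variable (z₀ : F2 → Fin 4) (x : F2 → Fin 2)

theorem fmap_ι (k : F2) : fmap z₀ x (ι k) = Fin.castLE (by norm_num) (x k) := by
  have hk : ι k ∈ Set.range ι := ⟨k, rfl⟩
  rw [fmap, dif_pos hk, ι_injective (Classical.choose_spec hk)]

theorem fmap_of_notMem_range {h : F3} (hh : h ∉ Set.range ι) : fmap z₀ x h = z₀ (tail h) :=
  dif_neg hh

theorem fmap_injective : Injective (fmap z₀) := by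
  intro x y hxy
  funext k
  have := congrFun hxy (ι k)
  rw [fmap_ι, fmap_ι] at this
  exact Fin.castLE_injective _ this

theorem fmap_shift (g : F2) : fmap z₀ (shift g x) = shift (ι g) (fmap z₀ x) := by
  funext h
  rw [shift, ← map_inv]
  by_cases hh : h ∈ Set.range ι
  · obtain ⟨k, rfl⟩ := hh
    rw [← map_mul, fmap_ι, fmap_ι]
    rfl
  · rw [fmap_of_notMem_range _ _ hh,
      fmap_of_notMem_range _ _ (mt (ι_mul_mem_range_iff _).1 hh), tail_ι_mul _ hh]

end fmap

theorem fmap_injective_equivariant_orbit_reduction_general (z₀ : F2 → Fin 4) :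
    Function.Injective (fmap z₀) ∧
    (∀ (g : F2) (x : F2 → Fin 2), fmap z₀ (shift g x) = shift (ι g) (fmap z₀ x)) ∧
    (∀ x y : F2 → Fin 2,
      (∃ g : F2, shift g x = y) ↔ ∃ g : F2, shift (ι g) (fmap z₀ x) = fmap z₀ y) := by
  refine ⟨fmap_injective z₀, fun g x => fmap_shift z₀ x g, fun x y => ?_⟩
  simp only [← fmap_shift, (fmap_injective z₀).eq_iff]

/-- `f` is injective, intertwines the `F₂`-shift actions, and induces a reduction of the
`F₂`-orbit equivalence relation on `2^{F₂}` to that on `4^{F₃}`. -/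
theorem fmap_injective_equivariant_orbit_reduction (z₀ : F2 → Fin 4)
    (hz₀ : ∀ g : F2, z₀ g = 2 ∨ z₀ g = 3) (hzfree : LeftFree z₀) :
    Function.Injective (fmap z₀) ∧
    (∀ (g : F2) (x : F2 → Fin 2), fmap z₀ (shift g x) = shift (ι g) (fmap z₀ x)) ∧
    (∀ x y : F2 → Fin 2,
      (∃ g : F2, shift g x = y) ↔ ∃ g : F2, shift (ι g) (fmap z₀ x) = fmap z₀ y) :=
  fmap_injective_equivariant_orbit_reduction_general z₀
end

section
/- There exists a perfect (equivalently, an uncountable closed) subset of 2^ℕ consisting of pairwise Turing-incomparable elements; consequently, there is a Borel injection from ℝ (equivalently from 2^ℕ) into 2^ℕ whose distinct values are pairwise Turing-inequivalent. -/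
/-- Partial recursiveness in an oracle `O : ℕ → ℕ`, mirroring `Nat.Partrec`. -/
inductive RecursiveInOracle (O : ℕ → ℕ) : (ℕ →. ℕ) → Prop
  | zero : RecursiveInOracle O (pure 0)
  | succ : RecursiveInOracle O ↑Nat.succ
  | left : RecursiveInOracle O ↑fun n : ℕ => n.unpair.1
  | right : RecursiveInOracle O ↑fun n : ℕ => n.unpair.2
  | oracle : RecursiveInOracle O ↑O
  | pair {f g} : RecursiveInOracle O f → RecursiveInOracle O g →
      RecursiveInOracle O fun n => Nat.pair <$> f n <*> g n
  | comp {f g} : RecursiveInOracle O f → RecursiveInOracle O g →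
      RecursiveInOracle O fun n => g n >>= f
  | prec {f g} : RecursiveInOracle O f → RecursiveInOracle O g →
      RecursiveInOracle O (Nat.unpaired fun a n =>
        n.rec (f a) fun y IH => do let i ← IH; g (Nat.pair a (Nat.pair y i)))
  | rfind {f} : RecursiveInOracle O f →
      RecursiveInOracle O fun a => Nat.rfind fun n => (fun m => m = 0) <$> f (Nat.pair a n)

/-- View `x : ℕ → Bool` (a subset of ℕ) as a ℕ-valued function. -/
def charFun (x : ℕ → Bool) : ℕ → ℕ := fun n => if x n then 1 else 0

/-- Turing reducibility `x ≤_T y` on Cantor space. -/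
def TuringLE (x y : ℕ → Bool) : Prop := RecursiveInOracle (charFun y) ↑(charFun x)

/-- Turing equivalence `x ≡_T y` on Cantor space. -/
def TuringEquiv (x y : ℕ → Bool) : Prop := TuringLE x y ∧ TuringLE y x

namespace TI

/-! ### Oracle codes -/

inductive OCode
  | zero | succ | left | right | oracle
  | pair (a b : OCode) | comp (a b : OCode) | prec (a b : OCode) | rfind (a : OCode)

open OCode in
/-- Evaluation relative to a partial oracle. -/
def evalo (O : ℕ →. ℕ) : OCode → ℕ →. ℕ
  | OCode.zero => pure 0
  | OCode.succ => ↑Nat.succ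
  | OCode.left => ↑fun n : ℕ => n.unpair.1
  | OCode.right => ↑fun n : ℕ => n.unpair.2
  | OCode.oracle => O
  | OCode.pair a b => fun n => Nat.pair <$> evalo O a n <*> evalo O b n
  | OCode.comp a b => fun n => evalo O b n >>= evalo O a
  | OCode.prec a b => Nat.unpaired fun x n =>
      n.rec (evalo O a x) fun y IH => do let i ← IH; evalo O b (Nat.pair x (Nat.pair y i))
  | OCode.rfind a => fun x => Nat.rfind fun n => (fun m => m = 0) <$> evalo O a (Nat.pair x n)

theorem exists_code {O : ℕ → ℕ} {f : ℕ →. ℕ} (h : RecursiveInOracle O f) :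
    ∃ c : OCode, evalo ↑O c = f := by
  induction h with
  | zero => exact ⟨OCode.zero, rfl⟩
  | succ => exact ⟨OCode.succ, rfl⟩
  | left => exact ⟨OCode.left, rfl⟩
  | right => exact ⟨OCode.right, rfl⟩
  | oracle => exact ⟨OCode.oracle, rfl⟩
  | pair _ _ ih₁ ih₂ =>
    obtain ⟨c₁, rfl⟩ := ih₁; obtain ⟨c₂, rfl⟩ := ih₂; exact ⟨OCode.pair c₁ c₂, rfl⟩
  | comp _ _ ih₁ ih₂ =>
    obtain ⟨c₁, rfl⟩ := ih₁; obtain ⟨c₂, rfl⟩ := ih₂; exact ⟨OCode.comp c₁ c₂, rfl⟩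
  | prec _ _ ih₁ ih₂ =>
    obtain ⟨c₁, rfl⟩ := ih₁; obtain ⟨c₂, rfl⟩ := ih₂; exact ⟨OCode.prec c₁ c₂, rfl⟩
  | rfind _ ih =>
    obtain ⟨c, rfl⟩ := ih; exact ⟨OCode.rfind c, rfl⟩

/-- An enumeration of all codes. -/
def ofNat' : ℕ → OCode
  | 0 => OCode.zero
  | 1 => OCode.succ
  | 2 => OCode.left
  | 3 => OCode.right
  | 4 => OCode.oracle
  | n + 5 =>
    let m := n / 4
    have hm : m < n + 5 := Nat.lt_succ_of_le (Nat.le_add_right_of_le (Nat.div_le_self n 4))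
    have h1 : m.unpair.1 < n + 5 := lt_of_le_of_lt (Nat.unpair_left_le m) hm
    have h2 : m.unpair.2 < n + 5 := lt_of_le_of_lt (Nat.unpair_right_le m) hm
    match n % 4 with
    | 0 => OCode.pair (ofNat' m.unpair.1) (ofNat' m.unpair.2)
    | 1 => OCode.comp (ofNat' m.unpair.1) (ofNat' m.unpair.2)
    | 2 => OCode.prec (ofNat' m.unpair.1) (ofNat' m.unpair.2)
    | _ => OCode.rfind (ofNat' m)
decreasing_by
  all_goals (have := Nat.unpair_left_le (n / 4); have := Nat.unpair_right_le (n / 4); have := Nat.div_le_self n 4; omega)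

theorem ofNat'_surjective : Function.Surjective ofNat' := by
  intro c
  induction c with
  | zero => exact ⟨0, by simp [ofNat']⟩
  | succ => exact ⟨1, by simp [ofNat']⟩
  | left => exact ⟨2, by simp [ofNat']⟩
  | right => exact ⟨3, by simp [ofNat']⟩
  | oracle => exact ⟨4, by simp [ofNat']⟩
  | pair a b iha ihb =>
    obtain ⟨ka, rfl⟩ := iha; obtain ⟨kb, rfl⟩ := ihb
    refine ⟨4 * Nat.pair ka kb + 0 + 5, ?_⟩
    simp [ofNat', Nat.mul_add_mod, Nat.mul_add_div (by norm_num : (0:ℕ) < 4), Nat.unpair_pair]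
  | comp a b iha ihb =>
    obtain ⟨ka, rfl⟩ := iha; obtain ⟨kb, rfl⟩ := ihb
    refine ⟨4 * Nat.pair ka kb + 1 + 5, ?_⟩
    simp [ofNat', Nat.mul_add_mod, Nat.mul_add_div (by norm_num : (0:ℕ) < 4), Nat.unpair_pair]
  | prec a b iha ihb =>
    obtain ⟨ka, rfl⟩ := iha; obtain ⟨kb, rfl⟩ := ihb
    refine ⟨4 * Nat.pair ka kb + 2 + 5, ?_⟩
    simp [ofNat', Nat.mul_add_mod, Nat.mul_add_div (by norm_num : (0:ℕ) < 4), Nat.unpair_pair]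
  | rfind a iha =>
    obtain ⟨ka, rfl⟩ := iha
    refine ⟨4 * ka + 3 + 5, ?_⟩
    simp [ofNat', Nat.mul_add_mod, Nat.mul_add_div (by norm_num : (0:ℕ) < 4)]

/-! ### Monotonicity in the oracle -/

/-- Pointwise refinement of partial oracles. -/
def PLE (O O' : ℕ →. ℕ) : Prop := ∀ n a, a ∈ O n → a ∈ O' n

theorem PLE.trans {O₁ O₂ O₃ : ℕ →. ℕ} (h : PLE O₁ O₂) (h' : PLE O₂ O₃) : PLE O₁ O₃ :=
  fun n a ha => h' n a (h n a ha)

theorem mem_pair_seq {f g : Part ℕ} {x : ℕ} :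
    x ∈ (Nat.pair <$> f <*> g) ↔ ∃ u ∈ f, ∃ v ∈ g, Nat.pair u v = x := by
  simp only [Seq.seq, Part.bind_eq_bind, Part.map_eq_map, Part.mem_bind_iff, Part.mem_map_iff]
  constructor
  · rintro ⟨_, ⟨u, hu, rfl⟩, v, hv, rfl⟩; exact ⟨u, hu, v, hv, rfl⟩
  · rintro ⟨u, hu, v, hv, rfl⟩; exact ⟨_, ⟨u, hu, rfl⟩, v, hv, rfl⟩

theorem evalo_mono {O O' : ℕ →. ℕ} (h : PLE O O') :
    ∀ (c : OCode) (n a : ℕ), a ∈ evalo O c n → a ∈ evalo O' c n := by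
  intro c
  induction c with
  | zero => intro n a ha; exact ha
  | succ => intro n a ha; exact ha
  | left => intro n a ha; exact ha
  | right => intro n a ha; exact ha
  | oracle => intro n a ha; exact h n a ha
  | pair a b iha ihb =>
    intro n x hx
    simp only [evalo] at hx ⊢
    rw [mem_pair_seq] at hx ⊢
    obtain ⟨u, hu, v, hv, rfl⟩ := hx
    exact ⟨u, iha _ _ hu, v, ihb _ _ hv, rfl⟩
  | comp a b iha ihb =>
    intro n x hx
    simp only [evalo] at hx ⊢
    obtain ⟨u, hu, hx⟩ := Part.mem_bind_iff.mp hx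
    exact Part.mem_bind_iff.mpr ⟨u, ihb _ _ hu, iha _ _ hx⟩
  | prec a b iha ihb =>
    intro n x hx
    simp only [evalo, Nat.unpaired] at hx ⊢
    generalize n.unpair.2 = k at hx ⊢
    induction k generalizing x with
    | zero => exact iha _ _ hx
    | succ k ihk =>
      simp only [Part.bind_eq_bind, Part.mem_bind_iff] at hx ⊢
      obtain ⟨i, hi, hx⟩ := hx
      exact ⟨i, ihk _ hi, ihb _ _ hx⟩
  | rfind a iha =>
    intro n x hx
    simp only [evalo] at hx ⊢
    erw [Nat.mem_rfind] at hx ⊢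
    obtain ⟨h1, h2⟩ := hx
    constructor
    · erw [Part.map_eq_map, Part.mem_map_iff] at h1 ⊢
      obtain ⟨u, hu, hux⟩ := h1
      exact ⟨u, iha _ _ hu, hux⟩
    · intro m hm
      have := h2 hm
      erw [Part.map_eq_map, Part.mem_map_iff] at this ⊢
      obtain ⟨u, hu, hux⟩ := this
      exact ⟨u, iha _ _ hu, hux⟩

/-! ### Compactness (use principle) -/

/-- Restriction of a total oracle to arguments `< k`. -/
def restr (O : ℕ → ℕ) (k : ℕ) : ℕ →. ℕ := fun n => if n < k then Part.some (O n) else Part.none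

theorem restr_mono {O : ℕ → ℕ} {k k' : ℕ} (h : k ≤ k') : PLE (restr O k) (restr O k') := by
  intro n a ha
  simp only [restr] at ha ⊢
  split at ha
  · rw [if_pos (lt_of_lt_of_le (by assumption) h)]; exact ha
  · exact absurd ha (Part.notMem_none a)

theorem restr_le (O : ℕ → ℕ) (k : ℕ) : PLE (restr O k) ↑O := by
  intro n a ha
  simp only [restr] at ha
  split at ha
  · simpa using ha
  · exact absurd ha (Part.notMem_none a)

theorem sup_exists {P : ℕ → ℕ → Prop} (mono : ∀ m k k', k ≤ k' → P m k → P m k')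
    (n : ℕ) (H : ∀ m, m ≤ n → ∃ k, P m k) : ∃ k, ∀ m, m ≤ n → P m k := by
  induction n with
  | zero =>
    obtain ⟨k, hk⟩ := H 0 le_rfl
    exact ⟨k, fun m hm => by simpa [Nat.le_zero.mp hm] using hk⟩
  | succ n ih =>
    obtain ⟨k₁, hk₁⟩ := ih fun m hm => H m (hm.trans (Nat.le_succ n))
    obtain ⟨k₂, hk₂⟩ := H (n + 1) le_rfl
    refine ⟨max k₁ k₂, fun m hm => ?_⟩
    rcases Nat.lt_succ_iff_lt_or_eq.mp (Nat.lt_succ_of_le hm) with h | rfl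
    · exact mono _ _ _ (le_max_left _ _) (hk₁ m (Nat.lt_succ_iff.mp h))
    · exact mono _ _ _ (le_max_right _ _) hk₂

theorem evalo_compact {O : ℕ → ℕ} :
    ∀ (c : OCode) (n a : ℕ), a ∈ evalo ↑O c n → ∃ k, a ∈ evalo (restr O k) c n := by
  intro c
  induction c with
  | zero => intro n a ha; exact ⟨0, ha⟩
  | succ => intro n a ha; exact ⟨0, ha⟩
  | left => intro n a ha; exact ⟨0, ha⟩
  | right => intro n a ha; exact ⟨0, ha⟩
  | oracle =>
    intro n a ha
    refine ⟨n + 1, ?_⟩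
    simp only [evalo] at ha ⊢
    simp only [restr, if_pos (Nat.lt_succ_self n)]
    simpa using ha
  | pair a b iha ihb =>
    intro n x hx
    simp only [evalo] at hx ⊢
    rw [mem_pair_seq] at hx
    obtain ⟨u, hu, v, hv, rfl⟩ := hx
    obtain ⟨k₁, hk₁⟩ := iha _ _ hu
    obtain ⟨k₂, hk₂⟩ := ihb _ _ hv
    refine ⟨max k₁ k₂, ?_⟩
    rw [mem_pair_seq]
    exact ⟨u, evalo_mono (restr_mono (le_max_left _ _)) _ _ _ hk₁,
      v, evalo_mono (restr_mono (le_max_right _ _)) _ _ _ hk₂, rfl⟩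
  | comp a b iha ihb =>
    intro n x hx
    simp only [evalo] at hx ⊢
    obtain ⟨u, hu, hx⟩ := Part.mem_bind_iff.mp hx
    obtain ⟨k₁, hk₁⟩ := ihb _ _ hu
    obtain ⟨k₂, hk₂⟩ := iha _ _ hx
    exact ⟨max k₁ k₂, Part.mem_bind_iff.mpr ⟨u, evalo_mono (restr_mono (le_max_left _ _)) _ _ _ hk₁,
      evalo_mono (restr_mono (le_max_right _ _)) _ _ _ hk₂⟩⟩
  | prec a b iha ihb =>
    have e : ∀ (O' : ℕ →. ℕ) (z j : ℕ), evalo O' (OCode.prec a b) (Nat.pair z (j + 1)) =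
        (evalo O' (OCode.prec a b) (Nat.pair z j)).bind
          (fun i => evalo O' b (Nat.pair z (Nat.pair j i))) := by
      intro O' z j
      simp [evalo, Nat.unpaired, Nat.unpair_pair]
    have key : ∀ (j z x : ℕ), x ∈ evalo ↑O (OCode.prec a b) (Nat.pair z j) →
        ∃ k, x ∈ evalo (restr O k) (OCode.prec a b) (Nat.pair z j) := by
      intro j
      induction j with
      | zero =>
        intro z x hx
        simp only [evalo, Nat.unpaired, Nat.unpair_pair] at hx ⊢
        exact iha _ _ hx
      | succ j ihj =>
        intro z x hx
        rw [e, Part.mem_bind_iff] at hx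
        obtain ⟨i, hi, hx⟩ := hx
        obtain ⟨k₁, hk₁⟩ := ihj z i hi
        obtain ⟨k₂, hk₂⟩ := ihb _ _ hx
        refine ⟨max k₁ k₂, ?_⟩
        rw [e, Part.mem_bind_iff]
        exact ⟨i, evalo_mono (restr_mono (le_max_left _ _)) _ _ _ hk₁,
          evalo_mono (restr_mono (le_max_right _ _)) _ _ _ hk₂⟩
    intro n x hx
    have := key n.unpair.2 n.unpair.1 x (by rwa [Nat.pair_unpair])
    obtain ⟨k, hk⟩ := this
    exact ⟨k, by rwa [Nat.pair_unpair] at hk⟩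
  | rfind a iha =>
    intro n x hx
    simp only [evalo] at hx ⊢
    erw [Nat.mem_rfind] at hx
    obtain ⟨h1, h2⟩ := hx
    erw [Part.map_eq_map, Part.mem_map_iff] at h1
    obtain ⟨u, hu, hux⟩ := h1
    have H : ∀ m, m ≤ x → ∃ k,
        ∃ v, v ∈ evalo (restr O k) a (Nat.pair n m) ∧ decide (v = 0) = decide (m = x) := by
      intro m hm
      rcases lt_or_eq_of_le hm with hm | rfl
      · have := h2 hm
        erw [Part.map_eq_map, Part.mem_map_iff] at this
        obtain ⟨v, hv, hvx⟩ := this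
        obtain ⟨k, hk⟩ := iha _ _ hv
        refine ⟨k, v, hk, ?_⟩
        simp only [decide_eq_false_iff_not] at hvx ⊢
        simpa [Nat.ne_of_lt hm] using hvx
      · obtain ⟨k, hk⟩ := iha _ _ hu
        refine ⟨k, u, hk, ?_⟩
        simpa using hux
    obtain ⟨k, hk⟩ := sup_exists (P := fun m k => ∃ v, v ∈ evalo (restr O k) a (Nat.pair n m) ∧
      decide (v = 0) = decide (m = x))
      (fun m k k' hkk' ⟨v, hv, hvx⟩ => ⟨v, evalo_mono (restr_mono hkk') _ _ _ hv, hvx⟩) x H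
    refine ⟨k, ?_⟩
    erw [Nat.mem_rfind]
    constructor
    · obtain ⟨v, hv, hvx⟩ := hk x le_rfl
      erw [Part.map_eq_map, Part.mem_map_iff]
      exact ⟨v, hv, by simpa using hvx⟩
    · intro m hm
      obtain ⟨v, hv, hvx⟩ := hk m hm.le
      erw [Part.map_eq_map, Part.mem_map_iff]
      exact ⟨v, hv, by simpa [Nat.ne_of_lt hm] using hvx⟩

/-! ### Finite string oracles -/

/-- The partial oracle given by a finite binary string. -/
def strO (l : List Bool) : ℕ →. ℕ :=
  fun n => if n < l.length then Part.some (if l.getD n false then 1 else 0) else Part.none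

/-- `l` is an initial segment of `x`. -/
def pfx (l : List Bool) (x : ℕ → Bool) : Prop := ∀ i, i < l.length → x i = l.getD i false

/-- The first `k` bits of `x`. -/
def bits (x : ℕ → Bool) (k : ℕ) : List Bool := (List.range k).map x

@[simp] theorem bits_length (x : ℕ → Bool) (k : ℕ) : (bits x k).length = k := by simp [bits]

theorem bits_getD {x : ℕ → Bool} {n k : ℕ} (h : n < k) : (bits x k).getD n false = x n := by
  simp [bits, List.getD_eq_getElem?_getD, List.getElem?_map, List.getElem?_range h]

theorem getD_prefix {l l' : List Bool} (h : l <+: l') {i : ℕ} (hi : i < l.length) :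
    l'.getD i false = l.getD i false := by
  obtain ⟨t, rfl⟩ := h
  simp [List.getD_eq_getElem?_getD, List.getElem?_append, hi]

theorem pfx_anti {l l' : List Bool} {x : ℕ → Bool} (h : l <+: l') (h' : pfx l' x) : pfx l x := by
  intro i hi
  rw [h' i (lt_of_lt_of_le hi h.length_le), getD_prefix h hi]

theorem strO_le_strO {l l' : List Bool} (h : l <+: l') : PLE (strO l) (strO l') := by
  intro n a ha
  simp only [strO] at ha ⊢
  split at ha
  · rename_i hn
    rw [if_pos (lt_of_lt_of_le hn h.length_le), getD_prefix h hn]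
    exact ha
  · exact absurd ha (Part.notMem_none a)

theorem strO_le_char {l : List Bool} {x : ℕ → Bool} (h : pfx l x) :
    PLE (strO l) ↑(charFun x) := by
  intro n a ha
  simp only [strO] at ha
  split at ha
  · rename_i hn
    rw [Part.mem_some_iff] at ha
    subst ha
    simp [charFun, h n hn]
  · exact absurd ha (Part.notMem_none a)

theorem restr_char_eq_strO (x : ℕ → Bool) (k : ℕ) : restr (charFun x) k = strO (bits x k) := by
  funext n
  simp only [restr, strO, bits_length]
  split
  · rename_i hn
    rw [bits_getD hn]
    rfl
  · rfl

theorem pfx_bits (x : ℕ → Bool) (k : ℕ) : pfx (bits x k) x := by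
  intro i hi
  rw [bits_getD (by simpa using hi)]

theorem pfx_eq_bits {l : List Bool} {x : ℕ → Bool} (h : pfx l x) : l = bits x l.length := by
  apply List.ext_getElem (by simp)
  intro i h1 h2
  have := h i h1
  rw [List.getD_eq_getElem l false h1] at this
  simp [bits, ← this]

theorem pfx_prefix_bits {l : List Bool} {x : ℕ → Bool} (h : pfx l x) {m : ℕ}
    (hm : l.length ≤ m) : l <+: bits x m := by
  rw [pfx_eq_bits h]
  have : (bits x m).take l.length = bits x l.length := by
    simp [bits, ← List.map_take, List.take_range, Nat.min_eq_left hm]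
  rw [← this]
  exact List.take_prefix _ _

/-! ### The forcing step -/

/-- `SAT c p q` says: for any `z` extending `p` and `w` extending `q`, the `c`-th
computation with oracle `w` does not compute `z`. -/
def SAT (c : OCode) (p q : List Bool) : Prop :=
  ∀ z w : ℕ → Bool, pfx p z → pfx q w → ∃ k, charFun z k ∉ evalo ↑(charFun w) c k

theorem SAT.mono {c : OCode} {p q p' q' : List Bool} (h : SAT c p q)
    (hp : p <+: p') (hq : q <+: q') : SAT c p' q' :=
  fun z w hz hw => h z w (pfx_anti hp hz) (pfx_anti hq hw)

theorem core (c : OCode) (p q : List Bool) :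
    ∃ p' q', p <+: p' ∧ q <+: q' ∧ SAT c p' q' := by
  by_cases hA : ∃ q'' k v, q <+: q'' ∧ p.length ≤ k ∧ v ∈ evalo (strO q'') c k
  · obtain ⟨q'', k, v, hq, hk, hv⟩ := hA
    set b : Bool := decide (v ≠ 1) with hb
    set r : List Bool := p ++ List.replicate (k - p.length) false with hr
    have hlen : r.length = k := by simp [hr]; omega
    refine ⟨r ++ [b], q'', ?_, hq, ?_⟩
    · rw [hr, List.append_assoc]; exact List.prefix_append _ _
    · intro z w hz hw
      refine ⟨k, fun hmem => ?_⟩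
      have hvw : v ∈ evalo ↑(charFun w) c k := evalo_mono (strO_le_char hw) c k v hv
      have huniq : charFun z k = v := Part.mem_unique hmem hvw
      have hzk : z k = b := by
        have h1 := hz k (by simp [hlen])
        have h2 : (r ++ [b]).getD k false = b := by
          rw [← hlen]
          simp [List.getD_eq_getElem?_getD]
        rw [h1, h2]
      rcases eq_or_ne v 1 with rfl | hv1
      · have : b = false := by simp [hb]
        rw [this] at hzk
        simp [charFun, hzk] at huniq
      · have : b = true := by simp [hb, hv1]
        rw [this] at hzk
        simp [charFun, hzk] at huniq
        exact hv1 huniq.symm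
  · push_neg at hA
    refine ⟨p, q, List.prefix_rfl, List.prefix_rfl, ?_⟩
    intro z w hz hw
    refine ⟨p.length, fun hmem => ?_⟩
    obtain ⟨k, hk⟩ := evalo_compact c p.length (charFun z p.length) hmem
    have hk' : charFun z p.length ∈ evalo (restr (charFun w) (max k q.length)) c p.length :=
      evalo_mono (restr_mono (le_max_left _ _)) _ _ _ hk
    rw [restr_char_eq_strO] at hk'
    exact hA (bits w (max k q.length)) p.length _
      (pfx_prefix_bits hw (le_max_right _ _)) le_rfl hk'

theorem multi (c : OCode) (ps : List (List Bool × List Bool)) :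
    ∀ ℓ : List Bool → List Bool, ∃ ℓ' : List Bool → List Bool,
      (∀ u, ℓ u <+: ℓ' u) ∧ ∀ pr ∈ ps, pr.1 ≠ pr.2 → SAT c (ℓ' pr.1) (ℓ' pr.2) := by
  induction ps with
  | nil => intro ℓ; exact ⟨ℓ, fun u => List.prefix_rfl, by simp⟩
  | cons hd tl ih =>
    intro ℓ
    by_cases hne : hd.1 = hd.2
    · obtain ⟨ℓ', h1, h2⟩ := ih ℓ
      refine ⟨ℓ', h1, ?_⟩
      intro pr hpr hprne
      rcases List.mem_cons.mp hpr with rfl | hpr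
      · exact absurd hne hprne
      · exact h2 pr hpr hprne
    · obtain ⟨p', q', hp, hq, hs⟩ := core c (ℓ hd.1) (ℓ hd.2)
      set ℓ1 := Function.update (Function.update ℓ hd.1 p') hd.2 q' with hℓ1
      obtain ⟨ℓ', h1, h2⟩ := ih ℓ1
      have e1 : ℓ1 hd.1 = p' := by
        rw [hℓ1, Function.update_of_ne hne, Function.update_self]
      have e2 : ℓ1 hd.2 = q' := by rw [hℓ1, Function.update_self]
      have base : ∀ u, ℓ u <+: ℓ1 u := by
        intro u
        rcases eq_or_ne u hd.2 with rfl | hu2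
        · rw [hℓ1, Function.update_self]; exact hq
        · rw [hℓ1, Function.update_of_ne hu2]
          rcases eq_or_ne u hd.1 with rfl | hu1
          · rw [Function.update_self]; exact hp
          · rw [Function.update_of_ne hu1]
      refine ⟨ℓ', fun u => (base u).trans (h1 u), ?_⟩
      intro pr hpr hprne
      rcases List.mem_cons.mp hpr with rfl | hpr
      · exact hs.mono (e1 ▸ h1 pr.1) (e2 ▸ h1 pr.2)
      · exact h2 pr hpr hprne

/-! ### The perfect tree construction -/

/-- All binary strings of length `s`. -/
def strs : ℕ → List (List Bool)
  | 0 => [[]]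
  | s + 1 => (strs s).flatMap fun u => [u ++ [false], u ++ [true]]

theorem mem_strs : ∀ (s : ℕ) (u : List Bool), u.length = s → u ∈ strs s
  | 0, u, h => by simp [strs, List.length_eq_zero_iff.mp h]
  | s + 1, u, h => by
    have hu : u ≠ [] := by intro e; rw [e] at h; simp at h
    have he : u.dropLast ++ [u.getLast hu] = u := List.dropLast_append_getLast hu
    rw [strs, List.mem_flatMap]
    refine ⟨u.dropLast, mem_strs s _ (by rw [List.length_dropLast, h]; rfl), ?_⟩
    rw [← he]
    cases u.getLast hu <;> simp

/-- All ordered pairs of binary strings of length `s`. -/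
def pairs (s : ℕ) : List (List Bool × List Bool) := (strs s).product (strs s)

theorem mem_pairs {s : ℕ} {u v : List Bool} (hu : u.length = s) (hv : v.length = s) :
    (u, v) ∈ pairs s := by
  rw [pairs, List.pair_mem_product]
  exact ⟨mem_strs s u hu, mem_strs s v hv⟩

/-- The labels of the perfect tree, built stage by stage. -/
noncomputable def Lam : ℕ → List Bool → List Bool
  | 0 => fun _ => []
  | s + 1 => (multi (ofNat' s.unpair.1) (pairs (s + 1))
      (fun u => Lam s u.dropLast ++ [u.getLastD false])).choose

theorem Lam_succ_pre (s : ℕ) (u : List Bool) :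
    Lam s u.dropLast ++ [u.getLastD false] <+: Lam (s + 1) u :=
  (multi (ofNat' s.unpair.1) (pairs (s + 1))
      (fun u => Lam s u.dropLast ++ [u.getLastD false])).choose_spec.1 u

theorem Lam_sat (s : ℕ) : ∀ pr ∈ pairs (s + 1), pr.1 ≠ pr.2 →
    SAT (ofNat' s.unpair.1) (Lam (s + 1) pr.1) (Lam (s + 1) pr.2) :=
  (multi (ofNat' s.unpair.1) (pairs (s + 1))
      (fun u => Lam s u.dropLast ++ [u.getLastD false])).choose_spec.2

theorem bits_succ (z : ℕ → Bool) (s : ℕ) : bits z (s + 1) = bits z s ++ [z s] := by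
  simp only [bits]
  rw [List.range_succ, List.map_append, List.map_singleton]

theorem lab_step (z : ℕ → Bool) (s : ℕ) :
    Lam s (bits z s) ++ [z s] <+: Lam (s + 1) (bits z (s + 1)) := by
  have h1 : (bits z (s + 1)).dropLast = bits z s := by
    rw [bits_succ]; exact List.dropLast_concat
  have h2 : (bits z (s + 1)).getLastD false = z s := by rw [bits_succ]; simp
  have := Lam_succ_pre s (bits z (s + 1))
  rwa [h1, h2] at this

theorem lab_mono (z : ℕ → Bool) {s t : ℕ} (h : s ≤ t) :
    Lam s (bits z s) <+: Lam t (bits z t) := by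
  induction h with
  | refl => exact List.prefix_rfl
  | step h ih => exact ih.trans ((List.prefix_append _ _).trans (lab_step z _))

theorem lab_len (z : ℕ → Bool) (s : ℕ) : s ≤ (Lam s (bits z s)).length := by
  induction s with
  | zero => simp
  | succ s ih =>
    have h1 := (lab_step z s).length_le
    simp only [List.length_append, List.length_singleton] at h1
    omega

/-- The branch of the perfect tree determined by `z`. -/
noncomputable def limit (z : ℕ → Bool) : ℕ → Bool :=
  fun n => (Lam (n + 1) (bits z (n + 1))).getD n false

theorem limit_pfx (z : ℕ → Bool) (s : ℕ) : pfx (Lam s (bits z s)) (limit z) := by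
  intro i hi
  rcases le_total (i + 1) s with h | h
  · have hp := lab_mono z h
    have hi' : i < (Lam (i + 1) (bits z (i + 1))).length :=
      lt_of_lt_of_le (Nat.lt_succ_self i) (lab_len z (i + 1))
    rw [show limit z i = (Lam (i+1) (bits z (i+1))).getD i false from rfl,
      getD_prefix hp hi']
  · have hp := lab_mono z h
    rw [show limit z i = (Lam (i+1) (bits z (i+1))).getD i false from rfl,
      getD_prefix hp hi]

theorem limit_at_split (z : ℕ → Bool) (n : ℕ) :
    limit z ((Lam n (bits z n)).length) = z n := by
  set m := (Lam n (bits z n)).length with hm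
  have h1 : Lam n (bits z n) ++ [z n] <+: Lam (n + 1) (bits z (n + 1)) := lab_step z n
  have hmlt : m < (Lam n (bits z n) ++ [z n]).length := by simp [hm]
  have hm2 : m < (Lam (n + 1) (bits z (n + 1))).length :=
    lt_of_lt_of_le hmlt h1.length_le
  have e : (Lam (n + 1) (bits z (n + 1))).getD m false = z n := by
    rw [getD_prefix h1 hmlt, hm]
    simp [List.getD_eq_getElem?_getD]
  rw [limit_pfx z (n + 1) m hm2, e]

theorem limit_injective : Function.Injective limit := by
  intro z w h
  by_contra hzw
  have hd : ∃ n, z n ≠ w n := by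
    by_contra hc; push_neg at hc; exact hzw (funext hc)
  set n := Nat.find hd with hn
  have hne : z n ≠ w n := Nat.find_spec hd
  have hlt : ∀ m, m < n → z m = w m := fun m hm => not_not.mp (Nat.find_min hd hm)
  have hb : bits z n = bits w n := by
    apply List.ext_getElem (by simp)
    intro i h1 h2
    simp only [bits_length] at h1
    simp only [bits, List.getElem_map, List.getElem_range]
    exact hlt i h1
  have e1 := limit_at_split z n
  have e2 := limit_at_split w n
  rw [h, hb] at e1
  rw [e1] at e2
  exact hne e2

theorem limit_incomp {z w : ℕ → Bool} (hzw : z ≠ w) : ¬ TuringLE (limit z) (limit w) := by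
  intro hle
  obtain ⟨c, hc⟩ := exists_code hle
  obtain ⟨e, rfl⟩ := ofNat'_surjective c
  have hd : ∃ n, z n ≠ w n := by
    by_contra hcn; push_neg at hcn; exact hzw (funext hcn)
  obtain ⟨n, hn⟩ := hd
  set s := Nat.pair e n with hs
  have hsn : n ≤ s := Nat.right_le_pair e n
  have hse : s.unpair.1 = e := by rw [hs, Nat.unpair_pair]
  have hmem : (bits z (s + 1), bits w (s + 1)) ∈ pairs (s + 1) := mem_pairs (by simp) (by simp)
  have hnep : bits z (s + 1) ≠ bits w (s + 1) := by
    intro he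
    apply hn
    have : (bits z (s + 1)).getD n false = (bits w (s + 1)).getD n false := by rw [he]
    rwa [bits_getD (by omega), bits_getD (by omega)] at this
  have hsat := Lam_sat s (bits z (s + 1), bits w (s + 1)) hmem hnep
  rw [hse] at hsat
  obtain ⟨k, hk⟩ := hsat (limit z) (limit w) (limit_pfx z (s + 1)) (limit_pfx w (s + 1))
  apply hk
  rw [hc]
  simp [PFun.lift]

theorem bits_eq_ofFn (z : ℕ → Bool) (m : ℕ) :
    bits z m = List.ofFn (fun i : Fin m => z i) := by
  apply List.ext_getElem (by simp)
  intro i h1 h2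
  simp [bits]

theorem limit_continuous : Continuous limit := by
  apply continuous_pi
  intro n
  have hfac : (fun z => limit z n) =
      (fun v : Fin (n + 1) → Bool => (Lam (n + 1) (List.ofFn v)).getD n false) ∘
        (fun z (i : Fin (n + 1)) => z i) := by
    funext z
    simp only [Function.comp, limit, bits_eq_ofFn]
  rw [hfac]
  exact continuous_of_discreteTopology.comp (continuous_pi fun i => continuous_apply (i : ℕ))

theorem not_countable_cantor : ¬ Countable (ℕ → Bool) := by
  intro h
  obtain ⟨g, hg⟩ := exists_surjective_nat (ℕ → Bool)
  obtain ⟨m, hm⟩ := hg (fun n => !g n n)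
  have := congrFun hm m
  simp at this

end TI

/-- There is a perfect set of pairwise Turing-incomparable elements of `2^ℕ`; consequently
there is a Borel injection from ℝ into `2^ℕ` whose distinct values are pairwise
Turing-inequivalent. -/
theorem perfect_set_of_turing_incomparables :
    (∃ P : Set (ℕ → Bool), Perfect P ∧ P.Nonempty ∧
      ∀ x ∈ P, ∀ y ∈ P, x ≠ y → ¬TuringLE x y ∧ ¬TuringLE y x) ∧
    ∃ f : ℝ → (ℕ → Bool), Measurable f ∧ Function.Injective f ∧
      ∀ a b : ℝ, a ≠ b → ¬TuringEquiv (f a) (f b) := by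
  constructor
  · refine ⟨Set.range TI.limit, ⟨?_, ?_⟩, ⟨TI.limit (fun _ => false), ⟨_, rfl⟩⟩, ?_⟩
    · exact (isCompact_range TI.limit_continuous).isClosed
    · rw [preperfect_iff_nhds]
      rintro x ⟨z, rfl⟩ U hU
      have tend : Filter.Tendsto (fun k => TI.limit (Function.update z k (!z k)))
          Filter.atTop (nhds (TI.limit z)) := by
        refine (TI.limit_continuous.continuousAt (x := z)).tendsto.comp ?_
        rw [tendsto_pi_nhds]
        intro i
        refine Filter.Tendsto.congr' (f₁ := fun _ => z i) ?_ tendsto_const_nhds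
        filter_upwards [Filter.eventually_gt_atTop i] with k hk
        exact (Function.update_of_ne (Nat.ne_of_lt hk) _ _).symm
      have hev : ∀ᶠ k in Filter.atTop,
          TI.limit (Function.update z k (!z k)) ∈ U := tend hU
      obtain ⟨k, hk⟩ := hev.exists
      refine ⟨TI.limit (Function.update z k (!z k)), ⟨hk, ⟨_, rfl⟩⟩, fun he => ?_⟩
      have h1 : Function.update z k (!z k) = z := TI.limit_injective he
      have h2 := congrFun h1 k
      simp at h2
    · rintro x ⟨z, rfl⟩ y ⟨w, rfl⟩ hxy
      have hzw : z ≠ w := fun e => hxy (by rw [e])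
      exact ⟨TI.limit_incomp hzw, TI.limit_incomp hzw.symm⟩
  · have hR : ¬ Countable ℝ := not_countable
    let e : ℝ ≃ᵐ (ℕ → Bool) :=
      PolishSpace.measurableEquivOfNotCountable hR TI.not_countable_cantor
    refine ⟨TI.limit ∘ e, (TI.limit_continuous.measurable).comp e.measurable,
      TI.limit_injective.comp e.injective, ?_⟩
    intro a b hab hEq
    exact TI.limit_incomp (fun h => hab (e.injective h)) hEq.1
end

section
/- Suppose every Turing-invariant Borel subset of 2^ℕ has uniform product measure 0 or 1. Then the identity relation on ℝ is not Borel bireducible with Turing equivalence; in fact there is no Borel reduction of ≡_T to the identity relation on ℝ, while there is a Borel reduction of the identity on ℝ to ≡_T. -/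
namespace TP

inductive Code : Type
  | zero | succ | left | right | oracle
  | pair (cf cg : Code)
  | comp (cf cg : Code)
  | prec (cf cg : Code)
  | rfind (cf : Code)

def eval (O : ℕ → ℕ) : Code → ℕ →. ℕ
  | .zero => pure 0
  | .succ => ↑Nat.succ
  | .left => ↑fun n : ℕ => n.unpair.1
  | .right => ↑fun n : ℕ => n.unpair.2
  | .oracle => ↑O
  | .pair cf cg => fun n => Nat.pair <$> eval O cf n <*> eval O cg n
  | .comp cf cg => fun n => eval O cg n >>= eval O cf
  | .prec cf cg => Nat.unpaired fun a n =>
      n.rec (eval O cf a) fun y IH => do let i ← IH; eval O cg (Nat.pair a (Nat.pair y i))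
  | .rfind cf => fun a => Nat.rfind fun n => (fun m => m = 0) <$> eval O cf (Nat.pair a n)

theorem exists_code {O : ℕ → ℕ} {f : ℕ →. ℕ} (h : RecursiveInOracle O f) :
    ∃ c : Code, eval O c = f := by
  induction h with
  | zero => exact ⟨.zero, rfl⟩
  | succ => exact ⟨.succ, rfl⟩
  | left => exact ⟨.left, rfl⟩
  | right => exact ⟨.right, rfl⟩
  | oracle => exact ⟨.oracle, rfl⟩
  | pair _ _ ihf ihg =>
      obtain ⟨cf, hf⟩ := ihf; obtain ⟨cg, hg⟩ := ihg
      exact ⟨.pair cf cg, by simp [eval, hf, hg]; rfl⟩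
  | comp _ _ ihf ihg =>
      obtain ⟨cf, hf⟩ := ihf; obtain ⟨cg, hg⟩ := ihg
      exact ⟨.comp cf cg, by simp [eval, hf, hg]; rfl⟩
  | prec _ _ ihf ihg =>
      obtain ⟨cf, hf⟩ := ihf; obtain ⟨cg, hg⟩ := ihg
      exact ⟨.prec cf cg, by simp [eval, hf, hg]; rfl⟩
  | rfind _ ihf =>
      obtain ⟨cf, hf⟩ := ihf
      exact ⟨.rfind cf, by simp [eval, hf]; rfl⟩

def encodeC : Code → ℕ
  | .zero => 0
  | .succ => 1
  | .left => 2
  | .right => 3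
  | .oracle => 4
  | .pair a b => 4 * Nat.pair (encodeC a) (encodeC b) + 5
  | .comp a b => 4 * Nat.pair (encodeC a) (encodeC b) + 6
  | .prec a b => 4 * Nat.pair (encodeC a) (encodeC b) + 7
  | .rfind a => 4 * encodeC a + 8


def dec : ℕ → ℕ → Code
  | 0, _ => .zero
  | _+1, 0 => .zero
  | _+1, 1 => .succ
  | _+1, 2 => .left
  | _+1, 3 => .right
  | _+1, 4 => .oracle
  | f+1, (n+5) =>
    match n % 4 with
    | 0 => .pair (dec f (n/4).unpair.1) (dec f (n/4).unpair.2)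
    | 1 => .comp (dec f (n/4).unpair.1) (dec f (n/4).unpair.2)
    | 2 => .prec (dec f (n/4).unpair.1) (dec f (n/4).unpair.2)
    | _+3 => .rfind (dec f (n/4))

theorem dec_encode : ∀ fuel (c : Code), encodeC c < fuel → dec fuel (encodeC c) = c := by
  intro fuel
  induction fuel with
  | zero => intro c h; omega
  | succ f ih =>
    intro c h
    cases c with
    | zero => rfl
    | succ => rfl
    | left => rfl
    | right => rfl
    | oracle => rfl
    | pair a b =>
        have ha : encodeC a < f := by
          have := Nat.left_le_pair (encodeC a) (encodeC b)
          simp only [encodeC] at h; omega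
        have hb : encodeC b < f := by
          have := Nat.right_le_pair (encodeC a) (encodeC b)
          simp only [encodeC] at h; omega
        show dec (f+1) (4 * Nat.pair (encodeC a) (encodeC b) + 5) = _
        rw [show 4 * Nat.pair (encodeC a) (encodeC b) + 5
            = (4 * Nat.pair (encodeC a) (encodeC b)) + 5 by ring]
        rw [dec]
        simp [Nat.mul_mod_right, Nat.mul_div_cancel_left _ (by norm_num : 0 < 4),
          ih a ha, ih b hb]
    | comp a b =>
        have ha : encodeC a < f := by
          have := Nat.left_le_pair (encodeC a) (encodeC b)
          simp only [encodeC] at h; omega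
        have hb : encodeC b < f := by
          have := Nat.right_le_pair (encodeC a) (encodeC b)
          simp only [encodeC] at h; omega
        show dec (f+1) ((4 * Nat.pair (encodeC a) (encodeC b) + 1) + 5) = _
        rw [dec]
        rw [show (4 * Nat.pair (encodeC a) (encodeC b) + 1) % 4 = 1 by omega,
          show (4 * Nat.pair (encodeC a) (encodeC b) + 1) / 4 = Nat.pair (encodeC a) (encodeC b) by omega]
        simp [ih a ha, ih b hb]
    | prec a b =>
        have ha : encodeC a < f := by
          have := Nat.left_le_pair (encodeC a) (encodeC b)
          simp only [encodeC] at h; omega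
        have hb : encodeC b < f := by
          have := Nat.right_le_pair (encodeC a) (encodeC b)
          simp only [encodeC] at h; omega
        show dec (f+1) ((4 * Nat.pair (encodeC a) (encodeC b) + 2) + 5) = _
        rw [dec]
        rw [show (4 * Nat.pair (encodeC a) (encodeC b) + 2) % 4 = 2 by omega,
          show (4 * Nat.pair (encodeC a) (encodeC b) + 2) / 4 = Nat.pair (encodeC a) (encodeC b) by omega]
        simp [ih a ha, ih b hb]
    | rfind a =>
        have ha : encodeC a < f := by simp only [encodeC] at h; omega
        show dec (f+1) ((4 * encodeC a + 3) + 5) = _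
        rw [dec]
        rw [show (4 * encodeC a + 3) % 4 = 3 by omega,
          show (4 * encodeC a + 3) / 4 = encodeC a by omega]
        simp [ih a ha]

instance : Countable Code := by
  have : Function.Injective encodeC := by
    intro c d h
    have e1 := dec_encode (encodeC d + 1) c (by omega)
    have e2 := dec_encode (encodeC d + 1) d (by omega)
    rw [h] at e1; exact e1.symm.trans e2

  exact this.countable

theorem agree_mono {k K : ℕ} (h : k ≤ K) {O O' : ℕ → ℕ}
    (hO : ∀ i < K, O' i = O i) : ∀ i < k, O' i = O i :=
  fun i hi => hO i (lt_of_lt_of_le hi h)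

theorem eval_use {O : ℕ → ℕ} (c : Code) :
    ∀ {n m : ℕ}, m ∈ eval O c n →
      ∃ k, ∀ O' : ℕ → ℕ, (∀ i < k, O' i = O i) → m ∈ eval O' c n := by
  induction c with
  | zero => exact fun h => ⟨0, fun O' _ => h⟩
  | succ => exact fun h => ⟨0, fun O' _ => h⟩
  | left => exact fun h => ⟨0, fun O' _ => h⟩
  | right => exact fun h => ⟨0, fun O' _ => h⟩
  | oracle =>
      intro n m h
      simp only [eval, PFun.coe_val, Part.mem_some_iff] at h ⊢
      exact ⟨n + 1, fun O' hO' => by rw [hO' n (Nat.lt_succ_self n)]; exact h⟩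
  | pair cf cg ihf ihg =>
      intro n m h
      simp only [eval, Seq.seq, Part.bind_eq_bind, Part.mem_bind_iff, Part.map_eq_map,
        Part.mem_map_iff] at h ⊢
      obtain ⟨_, ⟨a, ha, rfl⟩, b, hb, hm⟩ := h
      obtain ⟨k1, hk1⟩ := ihf ha
      obtain ⟨k2, hk2⟩ := ihg hb
      exact ⟨max k1 k2, fun O' hO' =>
        ⟨Nat.pair a, ⟨a, hk1 O' (agree_mono (le_max_left _ _) hO'), rfl⟩,
         b, hk2 O' (agree_mono (le_max_right _ _) hO'), hm⟩⟩
  | comp cf cg ihf ihg =>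
      intro n m h
      simp only [eval, Part.bind_eq_bind, Part.mem_bind_iff] at h ⊢
      obtain ⟨a, ha, hm⟩ := Part.mem_bind_iff.mp h
      obtain ⟨k1, hk1⟩ := ihg ha
      obtain ⟨k2, hk2⟩ := ihf hm
      exact ⟨max k1 k2, fun O' hO' => Part.mem_bind_iff.mpr
        ⟨a, hk1 O' (agree_mono (le_max_left _ _) hO'),
         hk2 O' (agree_mono (le_max_right _ _) hO')⟩⟩
  | prec cf cg ihf ihg =>
      intro n m h
      simp only [eval, Nat.unpaired] at h ⊢
      revert m
      induction n.unpair.2 with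
      | zero =>
          intro m h
          obtain ⟨k, hk⟩ := ihf h
          exact ⟨k, fun O' hO' => hk O' hO'⟩
      | succ j ihj =>
          intro m h
          simp only [Part.bind_eq_bind, Part.mem_bind_iff] at h ⊢
          obtain ⟨a, ha, hm⟩ := h
          obtain ⟨k1, hk1⟩ := ihj ha
          obtain ⟨k2, hk2⟩ := ihg hm
          exact ⟨max k1 k2, fun O' hO' =>
            ⟨a, hk1 O' (agree_mono (le_max_left _ _) hO'),
             hk2 O' (agree_mono (le_max_right _ _) hO')⟩⟩
  | rfind cf ihf =>
      intro n m h
      simp only [eval] at h ⊢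
      obtain ⟨htrue, hfalse⟩ := Nat.mem_rfind.mp h
      rw [Part.map_eq_map, Part.mem_map_iff] at htrue
      obtain ⟨v, hv, hvb⟩ := htrue
      obtain ⟨km, hkm⟩ := ihf hv
      have Hj : ∀ j, ∃ k, j < m → ∀ O' : ℕ → ℕ, (∀ i < k, O' i = O i) →
          false ∈ ((fun m => decide (m = 0)) <$> eval O' cf (Nat.pair n j) : Part Bool) := by
        intro j
        by_cases hj : j < m
        · have hf := hfalse hj
          rw [Part.map_eq_map, Part.mem_map_iff] at hf
          obtain ⟨w, hw, hwb⟩ := hf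
          obtain ⟨k, hk⟩ := ihf hw
          exact ⟨k, fun _ O' hO' => by
            rw [Part.map_eq_map, Part.mem_map_iff]
            exact ⟨w, hk O' hO', hwb⟩⟩
        · exact ⟨0, fun h => absurd h hj⟩
      choose kf hkf using Hj
      refine ⟨max km ((Finset.range m).sup kf), fun O' hO' => ?_⟩
      apply Nat.mem_rfind.mpr
      constructor
      · rw [Part.map_eq_map, Part.mem_map_iff]
        exact ⟨v, hkm O' (agree_mono (le_max_left _ _) hO'), hvb⟩
      · intro j hj
        exact hkf j hj O' (agree_mono
          (le_trans (Finset.le_sup (Finset.mem_range.2 hj)) (le_max_right _ _)) hO')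


theorem charFun_injective : Function.Injective charFun := by
  intro x y h
  funext n
  have := congrFun h n
  simp only [charFun] at this
  cases hx : x n <;> cases hy : y n <;> simp [hx, hy] at this ⊢

theorem turingLE_refl (x : ℕ → Bool) : TuringLE x x := RecursiveInOracle.oracle

theorem turingEquiv_refl (x : ℕ → Bool) : TuringEquiv x x :=
  ⟨turingLE_refl x, turingLE_refl x⟩

theorem countable_cone (x : ℕ → Bool) : {y : ℕ → Bool | TuringLE y x}.Countable := by
  have hsub : {y : ℕ → Bool | TuringLE y x} ⊆
      (fun y : ℕ → Bool => (↑(charFun y) : ℕ →. ℕ)) ⁻¹' (Set.range (eval (charFun x))) := by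
    intro y hy
    obtain ⟨c, hc⟩ := exists_code hy
    exact ⟨c, hc⟩
  have hinj : Function.Injective (fun y : ℕ → Bool => (↑(charFun y) : ℕ →. ℕ)) :=
    fun a b h => charFun_injective (PFun.lift_injective h)
  exact Set.Countable.mono hsub ((Set.countable_range _).preimage hinj)

open MeasureTheory in
theorem singleton_null (μ : Measure (ℕ → Bool))
    (hμ : ∀ (s : Finset ℕ) (σ : ℕ → Bool),
      μ {x : ℕ → Bool | ∀ i ∈ s, x i = σ i} = (1 / 2 : ENNReal) ^ s.card)
    (x : ℕ → Bool) : μ {x} = 0 := by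
  have hb : ∀ n : ℕ, μ {x} ≤ (1 / 2 : ENNReal) ^ n := by
    intro n
    have hsub : {x} ⊆ {z : ℕ → Bool | ∀ i ∈ Finset.range n, z i = x i} := by
      rintro z rfl; exact fun i _ => rfl
    calc μ {x} ≤ μ {z : ℕ → Bool | ∀ i ∈ Finset.range n, z i = x i} := measure_mono hsub
    _ = (1 / 2 : ENNReal) ^ n := by rw [hμ (Finset.range n) x, Finset.card_range]
  have ht : Filter.Tendsto (fun n : ℕ => (1 / 2 : ENNReal) ^ n) Filter.atTop (nhds 0) :=
    ENNReal.tendsto_pow_atTop_nhds_zero_of_lt_one (by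
      rw [ENNReal.div_lt_iff (by norm_num) (by norm_num)]; norm_num)
  have := ge_of_tendsto' ht hb
  exact le_zero_iff.mp this

open MeasureTheory in
theorem no_reduction (μ : Measure (ℕ → Bool)) [IsProbabilityMeasure μ]
    (hμ : ∀ (s : Finset ℕ) (σ : ℕ → Bool),
      μ {x : ℕ → Bool | ∀ i ∈ s, x i = σ i} = (1 / 2 : ENNReal) ^ s.card)
    (h01 : ∀ A : Set (ℕ → Bool), MeasurableSet A →
      (∀ x ∈ A, ∀ y, TuringEquiv x y → y ∈ A) → μ A = 0 ∨ μ A = 1) :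
    ¬∃ f : (ℕ → Bool) → ℝ, Measurable f ∧ ∀ x y, TuringEquiv x y ↔ f x = f y := by
  rintro ⟨f, hfm, hf⟩
  haveI : NullSingletonClass μ := ⟨singleton_null μ hμ⟩
  set B : ℚ → Set (ℕ → Bool) := fun q => f ⁻¹' Set.Iic (q : ℝ) with hB
  have hBmem : ∀ q x, x ∈ B q ↔ f x ≤ (q : ℝ) := fun q x => Iff.rfl
  have hBmeas : ∀ q, MeasurableSet (B q) := fun q => hfm measurableSet_Iic
  have hB01 : ∀ q, μ (B q) = 0 ∨ μ (B q) = 1 := by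
    intro q
    refine h01 _ (hBmeas q) ?_
    intro x hx y hxy
    have hxy' : f x = f y := (hf x y).mp hxy
    rw [hBmem] at hx ⊢
    rwa [← hxy']
  have hS : ∃ q, μ (B q) = 1 := by
    by_contra hno
    push_neg at hno
    have h0 : ∀ q, μ (B q) = 0 := fun q => (hB01 q).resolve_right (hno q)
    have hz : μ (⋃ q : ℚ, B q) = 0 := measure_iUnion_null h0
    have huniv : ⋃ q : ℚ, B q = Set.univ := by
      ext x
      simp only [Set.mem_iUnion, Set.mem_univ, iff_true]
      obtain ⟨q, hq⟩ := exists_rat_gt (f x)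
      exact ⟨q, (hBmem q x).mpr (le_of_lt hq)⟩
    rw [huniv, measure_univ] at hz
    exact one_ne_zero hz
  have hq0ex : ∃ q, μ (B q) = 0 := by
    by_contra hno
    push_neg at hno
    have h1 : ∀ q : ℚ, μ (B q)ᶜ = 0 := fun q =>
      (prob_compl_eq_zero_iff (hBmeas q)).mpr ((hB01 q).resolve_left (hno q))
    have hz : μ (⋃ q : ℚ, (B q)ᶜ) = 0 := measure_iUnion_null h1
    have huniv : ⋃ q : ℚ, (B q)ᶜ = Set.univ := by
      ext x
      simp only [Set.mem_iUnion, Set.mem_compl_iff, Set.mem_univ, iff_true]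
      obtain ⟨q, hq⟩ := exists_rat_lt (f x)
      exact ⟨q, fun hc => absurd ((hBmem q x).mp hc) (not_le.mpr hq)⟩
    rw [huniv, measure_univ] at hz
    exact one_ne_zero hz
  obtain ⟨q1, hq1⟩ := hS
  obtain ⟨q0, hq0⟩ := hq0ex
  set Sr : Set ℝ := (fun q : ℚ => (q : ℝ)) '' {q : ℚ | μ (B q) = 1} with hSr
  have hSrne : Sr.Nonempty := ⟨(q1 : ℝ), q1, hq1, rfl⟩
  have hq0S : ∀ q : ℚ, μ (B q) = 1 → (q0 : ℝ) < (q : ℝ) := by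
    intro q hq
    by_contra hle
    push_neg at hle
    have hle' : (q : ℚ) ≤ q0 := by exact_mod_cast hle
    have hsub : B q ⊆ B q0 := by
      intro x hx
      rw [hBmem] at hx ⊢
      exact le_trans hx (by exact_mod_cast hle')
    have hmono := measure_mono (μ := μ) hsub
    rw [hq, hq0] at hmono
    exact (by norm_num : ¬(1 : ENNReal) ≤ 0) hmono
  have hSrbdd : BddBelow Sr := by
    refine ⟨(q0 : ℝ), ?_⟩
    rintro _ ⟨q, hq, rfl⟩
    exact le_of_lt (hq0S q hq)
  set r : ℝ := sInf Sr with hr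
  set D : Set (ℕ → Bool) := ⋂ q : {q : ℚ // μ (B q) = 1}, B q with hD
  have hDmeas : MeasurableSet D := MeasurableSet.iInter fun q => hBmeas q
  have hDone : μ D = 1 := by
    rw [← prob_compl_eq_zero_iff hDmeas, hD, Set.compl_iInter]
    exact measure_iUnion_null fun q =>
      (prob_compl_eq_zero_iff (hBmeas q)).mpr q.2
  set U : Set (ℕ → Bool) := ⋃ q : {q : ℚ // (q : ℝ) < r}, B q with hU
  have hUnull : μ U = 0 := by
    refine measure_iUnion_null fun q => ?_
    refine (hB01 q).resolve_right fun h1 => ?_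
    have : r ≤ (q : ℝ) := csInf_le hSrbdd ⟨q, h1, rfl⟩
    exact absurd q.2 (not_lt.mpr this)
  have hCone : μ (D \ U) = 1 := by rw [measure_diff_null hUnull]; exact hDone
  obtain ⟨x₀, hx₀⟩ := nonempty_of_measure_ne_zero (by rw [hCone]; exact one_ne_zero)
  have hfr : ∀ x, x ∈ D \ U → f x = r := by
    rintro x ⟨hxD, hxU⟩
    refine le_antisymm ?_ ?_
    · refine le_csInf hSrne ?_
      rintro _ ⟨q, hq, rfl⟩
      exact (hBmem q x).mp (Set.mem_iInter.mp hxD ⟨q, hq⟩)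
    · by_contra hlt
      push_neg at hlt
      obtain ⟨q, hq1', hq2⟩ := exists_rat_btwn hlt
      exact hxU (Set.mem_iUnion.mpr ⟨⟨q, hq2⟩, (hBmem q x).mpr (le_of_lt hq1')⟩)
  have hCsub : D \ U ⊆ {y | TuringLE y x₀} := by
    intro y hy
    have : f x₀ = f y := by rw [hfr x₀ hx₀, hfr y hy]
    exact ((hf x₀ y).mpr this).2
  have hCnull : μ (D \ U) = 0 :=
    measure_mono_null hCsub ((countable_cone x₀).measure_zero μ)
  rw [hCone] at hCnull
  exact one_ne_zero hCnull

/-! ### Part 2: the Kleene–Post tree construction -/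

/-- `y : ℕ → Bool` extends the finite string `s`. -/
def Ext (y : ℕ → Bool) (s : List Bool) : Prop := ∀ i, i < s.length → y i = s.getD i false

theorem prefix_getD {l₁ l₂ : List Bool} (h : l₁ <+: l₂) {i : ℕ} (hi : i < l₁.length) :
    l₁.getD i false = l₂.getD i false := by
  rw [List.getD_eq_getElem _ _ hi, List.getD_eq_getElem _ _ (lt_of_lt_of_le hi h.length_le),
    h.getElem hi]

theorem ext_mono {y : ℕ → Bool} {s t : List Bool} (h : s <+: t) (hy : Ext y t) : Ext y s :=
  fun i hi => (hy i (lt_of_lt_of_le hi h.length_le)).trans (prefix_getD h hi).symm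

theorem ext_mapRange (y : ℕ → Bool) (n : ℕ) : Ext y ((List.range n).map y) := by
  intro i hi
  simp only [List.length_map, List.length_range] at hi
  rw [List.getD_eq_getElem _ _ (by simpa using hi)]
  simp

theorem prefix_mapRange {y : ℕ → Bool} {q : List Bool} {n : ℕ} (hy : Ext y q)
    (hn : q.length ≤ n) : q <+: (List.range n).map y := by
  rw [List.prefix_iff_eq_take]
  apply List.ext_getElem
  · simp; omega
  · intro i h1 h2
    have := hy i h1
    rw [List.getD_eq_getElem _ _ h1] at this
    simp [this]

theorem force (c : Code) (q : List Bool) (n₀ : ℕ) :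
    ∃ q', q <+: q' ∧
      ((∃ m, ∀ y : ℕ → Bool, Ext y q' → eval (charFun y) c n₀ = Part.some m) ∨
        ∀ y : ℕ → Bool, Ext y q' → ¬(eval (charFun y) c n₀).Dom) := by
  by_cases h : ∃ y : ℕ → Bool, Ext y q ∧ (eval (charFun y) c n₀).Dom
  · obtain ⟨y, hyq, hdom⟩ := h
    obtain ⟨k, hk⟩ := eval_use c (Part.get_mem hdom)
    refine ⟨(List.range (max k q.length)).map y,
      prefix_mapRange hyq (le_max_right _ _), Or.inl ⟨(eval (charFun y) c n₀).get hdom, ?_⟩⟩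
    intro y' hy'
    have hagree : ∀ i < k, charFun y' i = charFun y i := by
      intro i hi
      have hlen : i < ((List.range (max k q.length)).map y).length := by simp; omega
      have h1 := hy' i hlen
      have h2 := ext_mapRange y (max k q.length) i hlen
      have hyy : y' i = y i := h1.trans h2.symm
      simp [charFun, hyy]
    exact Part.eq_some_iff.mpr (hk _ hagree)
  · push_neg at h
    exact ⟨q, List.prefix_refl q, Or.inr h⟩

/-- The requirement "`charFun X` is not computed by `c` from `charFun Y`" is already decided
by the strings `σ` (for `X`) and `τ` (for `Y`). -/
def Sat (c : Code) (σ τ : List Bool) : Prop :=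
  ∃ n₀ : ℕ, ∀ X Y : ℕ → Bool, Ext X σ → Ext Y τ →
    Part.some (charFun X n₀) ≠ eval (charFun Y) c n₀

theorem Sat.mono {c : Code} {σ τ σ' τ' : List Bool} (h : Sat c σ τ)
    (h1 : σ <+: σ') (h2 : τ <+: τ') : Sat c σ' τ' :=
  let ⟨n₀, hn⟩ := h
  ⟨n₀, fun X Y hX hY => hn X Y (ext_mono h1 hX) (ext_mono h2 hY)⟩

theorem sat_step (c : Code) (p q : List Bool) :
    ∃ pq : List Bool × List Bool, p <+: pq.1 ∧ q <+: pq.2 ∧ Sat c pq.1 pq.2 := by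
  obtain ⟨q', hqq', hq'⟩ := force c q p.length
  rcases hq' with ⟨m, hm⟩ | hdiv
  · refine ⟨(p ++ [decide (m = 0)], q'), List.prefix_append _ _, hqq', p.length, ?_⟩
    intro X Y hX hY hEq
    rw [hm Y hY] at hEq
    have hXv : X p.length = decide (m = 0) := by
      have hlen : p.length < (p ++ [decide (m = 0)]).length := by simp
      have h1 := hX p.length hlen
      rw [List.getD_eq_getElem _ _ hlen] at h1
      simpa using h1
    have hval : charFun X p.length = m := Part.some_inj.mp hEq
    by_cases hm0 : m = 0
    · subst hm0
      simp at hXv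
      simp [charFun, hXv] at hval
    · simp [hm0] at hXv
      simp [charFun, hXv] at hval
      exact hm0 hval.symm
  · refine ⟨(p, q'), List.prefix_refl p, hqq', p.length, ?_⟩
    intro X Y hX hY hEq
    exact hdiv Y hY (by rw [← hEq]; trivial)

variable {V : Type} [DecidableEq V]

noncomputable def step (r : Code × V × V) (A : V → List Bool) : V → List Bool :=
  if r.2.1 = r.2.2 then A
  else fun v =>
    if v = r.2.1 then (Classical.choose (sat_step r.1 (A r.2.1) (A r.2.2))).1
    else if v = r.2.2 then (Classical.choose (sat_step r.1 (A r.2.1) (A r.2.2))).2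
    else A v

theorem step_extends (r : Code × V × V) (A : V → List Bool) (v : V) : A v <+: step r A v := by
  unfold step
  split
  · exact List.prefix_refl _
  · have spec := Classical.choose_spec (sat_step r.1 (A r.2.1) (A r.2.2))
    dsimp only
    split_ifs with h1 h2
    · rw [h1]; exact spec.1
    · rw [h2]; exact spec.2.1
    · exact List.prefix_refl _

theorem step_sat (r : Code × V × V) (A : V → List Bool) (hne : r.2.1 ≠ r.2.2) :
    Sat r.1 (step r A r.2.1) (step r A r.2.2) := by
  unfold step
  rw [if_neg hne]
  have spec := Classical.choose_spec (sat_step r.1 (A r.2.1) (A r.2.2))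
  rw [if_pos rfl, if_neg (Ne.symm hne), if_pos rfl]
  exact spec.2.2

noncomputable def runL (l : List (Code × V × V)) (A : V → List Bool) : V → List Bool :=
  l.foldl (fun A r => step r A) A

theorem runL_extends (l : List (Code × V × V)) (A : V → List Bool) (v : V) :
    A v <+: runL l A v := by
  induction l generalizing A with
  | nil => exact List.prefix_refl _
  | cons r l ih => exact (step_extends r A v).trans (ih (step r A))

theorem runL_sat (l : List (Code × V × V)) (A : V → List Bool) :
    ∀ r ∈ l, r.2.1 ≠ r.2.2 → Sat r.1 (runL l A r.2.1) (runL l A r.2.2) := by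
  induction l generalizing A with
  | nil => simp
  | cons r0 l ih =>
      intro r hr hne
      rcases List.mem_cons.mp hr with rfl | hr'
      · exact (step_sat r A hne).mono (runL_extends l _ _) (runL_extends l _ _)
      · exact ih (step r0 A) r hr' hne

def decodeC (n : ℕ) : Code := dec (n + 1) n

theorem decodeC_encodeC (c : Code) : decodeC (encodeC c) = c :=
  dec_encode _ c (Nat.lt_succ_self _)

def embed {n : ℕ} (v : Fin (n + 1) → Bool) : ℕ → Bool :=
  fun i => if h : i < n + 1 then v ⟨i, h⟩ else false

noncomputable def reqs (n : ℕ) : List (Code × (Fin (n+1) → Bool) × (Fin (n+1) → Bool)) :=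
  ((List.range (n+1)).map decodeC) ×ˢ
    ((Finset.univ : Finset (Fin (n+1) → Bool)).toList ×ˢ
      (Finset.univ : Finset (Fin (n+1) → Bool)).toList)

theorem mem_reqs {n : ℕ} (c : Code) (hc : encodeC c ≤ n) (s t : Fin (n+1) → Bool) :
    (c, s, t) ∈ reqs n := by
  rw [reqs, List.mem_product]
  refine ⟨?_, ?_⟩
  · exact List.mem_map.mpr ⟨encodeC c, List.mem_range.mpr (by omega), decodeC_encodeC c⟩
  · rw [List.mem_product]
    exact ⟨Finset.mem_toList.mpr (Finset.mem_univ s), Finset.mem_toList.mpr (Finset.mem_univ t)⟩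

noncomputable def extStr : (n : ℕ) → (ℕ → Bool) → List Bool
  | 0, _ => []
  | n+1, x => runL (reqs n)
      (fun v : Fin (n+1) → Bool => extStr n (embed v) ++ [v ⟨n, Nat.lt_succ_self n⟩])
      (fun i : Fin (n+1) => x i)

theorem extStr_congr : ∀ (n : ℕ) (x y : ℕ → Bool), (∀ i < n, x i = y i) →
    extStr n x = extStr n y := by
  intro n x y h
  cases n with
  | zero => rfl
  | succ n =>
      show runL _ _ _ = runL _ _ _
      congr 1
      funext i
      exact h i i.isLt

theorem extStr_succ (n : ℕ) (x : ℕ → Bool) :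
    extStr (n+1) x = runL (reqs n)
      (fun v : Fin (n+1) → Bool => extStr n (embed v) ++ [v ⟨n, Nat.lt_succ_self n⟩])
      (fun i : Fin (n+1) => x i) := rfl

theorem extStr_prefix (n : ℕ) (x : ℕ → Bool) : extStr n x <+: extStr (n+1) x := by
  rw [extStr_succ]
  have hagree : extStr n (embed (fun i : Fin (n+1) => x i)) = extStr n x :=
    extStr_congr n _ _ (fun i hi => by simp [embed, Nat.lt_succ_of_lt hi])
  refine List.IsPrefix.trans ?_ (runL_extends _ _ _)
  rw [hagree]
  exact List.prefix_append _ _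

theorem extStr_chain {m n : ℕ} (h : m ≤ n) (x : ℕ → Bool) : extStr m x <+: extStr n x := by
  induction h with
  | refl => exact List.prefix_refl _
  | step h ih => exact ih.trans (extStr_prefix _ x)

theorem extStr_len (n : ℕ) (x : ℕ → Bool) : n ≤ (extStr n x).length := by
  induction n with
  | zero => simp
  | succ n ih =>
      rw [extStr_succ]
      refine le_trans ?_ (List.IsPrefix.length_le (runL_extends _ _ _))
      have hagree : extStr n (embed (fun i : Fin (n+1) => x i)) = extStr n x :=
        extStr_congr n _ _ (fun i hi => by simp [embed, Nat.lt_succ_of_lt hi])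
      simp [hagree]
      omega

noncomputable def G (x : ℕ → Bool) : ℕ → Bool := fun n => (extStr (n+1) x).getD n false

theorem G_ext (n : ℕ) (x : ℕ → Bool) : Ext (G x) (extStr n x) := by
  intro i hi
  show (extStr (i+1) x).getD i false = _
  rcases le_total (i+1) n with h | h
  · exact prefix_getD (extStr_chain h x) (lt_of_lt_of_le (Nat.lt_succ_self i) (extStr_len _ x))
  · exact (prefix_getD (extStr_chain h x) hi).symm

theorem G_req {x y : ℕ → Bool} (hne : x ≠ y) (c : Code) :
    (↑(charFun (G x)) : ℕ →. ℕ) ≠ eval (charFun (G y)) c := by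
  have hd : ∃ d, x d ≠ y d := by
    by_contra hno
    push_neg at hno
    exact hne (funext hno)
  obtain ⟨d, hd⟩ := hd
  set n := max d (encodeC c) with hn
  set s : Fin (n+1) → Bool := fun i => x i with hs
  set t : Fin (n+1) → Bool := fun i => y i with ht
  have hst : s ≠ t := by
    intro h
    exact hd (congrFun h ⟨d, by omega⟩)
  have hsat := runL_sat (reqs n)
    (fun v : Fin (n+1) → Bool => extStr n (embed v) ++ [v ⟨n, Nat.lt_succ_self n⟩])
    (c, s, t) (mem_reqs c (le_max_right _ _) s t) hst
  obtain ⟨n₀, hn₀⟩ := hsat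
  intro hEq
  have hx : Ext (G x) (runL (reqs n)
      (fun v : Fin (n+1) → Bool => extStr n (embed v) ++ [v ⟨n, Nat.lt_succ_self n⟩])
      (fun i : Fin (n+1) => x i)) := by
    rw [← extStr_succ]; exact G_ext (n+1) x
  have hy : Ext (G y) (runL (reqs n)
      (fun v : Fin (n+1) → Bool => extStr n (embed v) ++ [v ⟨n, Nat.lt_succ_self n⟩])
      (fun i : Fin (n+1) => y i)) := by
    rw [← extStr_succ]; exact G_ext (n+1) y
  exact hn₀ (G x) (G y) hx hy (by rw [← hEq]; rfl)

theorem no_turingLE {x y : ℕ → Bool} (hne : x ≠ y) : ¬TuringLE (G x) (G y) := by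
  intro h
  obtain ⟨c, hc⟩ := exists_code h
  exact G_req hne c hc.symm

theorem measurable_G : Measurable G := by
  apply measurable_pi_lambda
  intro n
  have heq : (fun x => G x n) =
      (fun v : Fin (n+1) → Bool => (extStr (n+1) (embed v)).getD n false) ∘
        (fun (x : ℕ → Bool) (i : Fin (n+1)) => x i) := by
    funext x
    show (extStr (n+1) x).getD n false = (extStr (n+1) (embed (fun i : Fin (n+1) => x i))).getD n false
    rw [extStr_congr (n+1) (embed (fun i : Fin (n+1) => x i)) x
      (fun i hi => by simp [embed, hi])]
  rw [heq]
  exact (measurable_of_countable _).comp (measurable_pi_lambda _ fun i => measurable_pi_apply (i : ℕ))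

theorem not_countable_cantor : ¬Countable (ℕ → Bool) := by
  intro h
  obtain ⟨f, hf⟩ := Countable.exists_injective_nat (ℕ → Bool)
  let g : ℕ → Bool := fun n => !(Function.invFun f n n)
  have hinv : Function.invFun f (f g) = g := Function.leftInverse_invFun hf g
  have h2 : g (f g) = !(Function.invFun f (f g) (f g)) := rfl
  rw [hinv] at h2
  simp at h2

open MeasureTheory in
theorem reduction_exists :
    ∃ g : ℝ → (ℕ → Bool), Measurable g ∧ ∀ a b : ℝ, a = b ↔ TuringEquiv (g a) (g b) := by
  have h1 : ¬Countable ℝ := not_countable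
  let e : ℝ ≃ᵐ (ℕ → Bool) := PolishSpace.measurableEquivOfNotCountable h1 not_countable_cantor
  refine ⟨G ∘ e, measurable_G.comp e.measurable, ?_⟩
  intro a b
  constructor
  · rintro rfl
    exact turingEquiv_refl _
  · intro h
    by_contra hne
    have hxy : e a ≠ e b := fun hh => hne (e.toEquiv.injective hh)
    exact no_turingLE hxy h.1

end TP


open MeasureTheory

/-- Assuming the 0-1 law for Turing-invariant Borel sets with respect to the uniform
product measure, the identity on ℝ is not Borel bireducible with Turing equivalence:
there is no Borel reduction of `≡_T` to `=_ℝ`, but there is a Borel reduction of `=_ℝ`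
to `≡_T`. -/
theorem identity_strictly_below_turing
    (μ : Measure (ℕ → Bool)) [IsProbabilityMeasure μ]
    (hμ : ∀ (s : Finset ℕ) (σ : ℕ → Bool),
      μ {x : ℕ → Bool | ∀ i ∈ s, x i = σ i} = (1 / 2 : ENNReal) ^ s.card)
    (h01 : ∀ A : Set (ℕ → Bool), MeasurableSet A →
      (∀ x ∈ A, ∀ y, TuringEquiv x y → y ∈ A) → μ A = 0 ∨ μ A = 1) :
    (¬∃ f : (ℕ → Bool) → ℝ, Measurable f ∧ ∀ x y, TuringEquiv x y ↔ f x = f y) ∧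
    ∃ g : ℝ → (ℕ → Bool), Measurable g ∧ ∀ a b : ℝ, a = b ↔ TuringEquiv (g a) (g b) := by
  exact ⟨TP.no_reduction μ hμ h01, TP.reduction_exists⟩
end
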